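/- Let V be a finite-dimensional real vector space and let e ∈ ℝ[S_3] be either η or ξ_ν for some ν ∈ ℝ with ν ≠ 1/2. Then the space A'(V) of algebraic covariant derivative curvature tensors on V equals the linear span of {y_{t'}*(U⊗S) : U trilinear with eU = U, S a symmetric bilinear form on V}, and also equals the linear span of {y_{t'}*(U⊗A) : U trilinear with eU = U, A an alternating bilinear form on V}. -/

import Mathlib

/-- Action of a group ring element `a ∈ ℝ[S_r]` on an `r`-multilinear map:
`(aT)(v₁,…,v_r) = Σ_p a(p)·T(v_{p(1)},…,v_{p(r)})`. -/
noncomputable def gact {V : Type} [AddCommGroup V] [Module ℝ V] {r : ℕ}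
    (a : MonoidAlgebra ℝ (Equiv.Perm (Fin r)))
    (T : MultilinearMap ℝ (fun _ : Fin r => V) ℝ) :
    MultilinearMap ℝ (fun _ : Fin r => V) ℝ :=
  ∑ p : Equiv.Perm (Fin r), a.coeff p • T.domDomCongr p
/-- Pointwise action of a group ring element `a ∈ ℝ[S_r]` on a function
`T : V^r → ℝ`: `(aT)(v₁,…,v_r) = Σ_p a(p)·T(v_{p(1)},…,v_{p(r)})`. -/
noncomputable def fact {V : Type} [AddCommGroup V] [Module ℝ V] {r : ℕ}
    (a : MonoidAlgebra ℝ (Equiv.Perm (Fin r)))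
    (T : (Fin r → V) → ℝ) : (Fin r → V) → ℝ :=
  fun v => ∑ p : Equiv.Perm (Fin r), a.coeff p * T (fun i => v (p i))
/-- The star map `a* := Σ_p a(p)·p⁻¹` on the group ring `ℝ[S_r]`. -/
noncomputable def astar {r : ℕ} (a : MonoidAlgebra ℝ (Equiv.Perm (Fin r))) :
    MonoidAlgebra ℝ (Equiv.Perm (Fin r)) :=
  MonoidAlgebra.ofCoeff (Finsupp.equivFunOnFinite.symm (fun p => a.coeff p⁻¹))
/-- The Young symmetrizer `y_{t'} = Σ_{p∈H_{t'}} Σ_{q∈V_{t'}} sign(q)·(p∘q)` of the tableau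
with rows `{1,3,5}`, `{2,4}` (indices `0`-based in `Fin 5`): `H_{t'}` is the group of
permutations mapping `{0,2,4}` to itself and `{1,3}` to itself, and
`V_{t'} = {id, (1 2), (3 4), (1 2)(3 4)}`. -/
noncomputable def ytp : MonoidAlgebra ℝ (Equiv.Perm (Fin 5)) :=
  (∑ p ∈ Finset.univ.filter (fun p : Equiv.Perm (Fin 5) =>
      ({0, 2, 4} : Finset (Fin 5)).image p = {0, 2, 4} ∧
      ({1, 3} : Finset (Fin 5)).image p = {1, 3}),
    MonoidAlgebra.single p (1 : ℝ)) *
  (MonoidAlgebra.single 1 1 - MonoidAlgebra.single (Equiv.swap 0 1) 1 -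
     MonoidAlgebra.single (Equiv.swap 2 3) 1 +
     MonoidAlgebra.single (Equiv.swap 0 1 * Equiv.swap 2 3) 1)
/-- `ξ_ν := (1/3)(id + ν·(2 3) + (1−ν)·(1 2) − ν·(1 2 3) + (ν−1)·(1 3 2) − (1 3)) ∈ ℝ[S_3]`,
with `0`-based indices in `Fin 3`; `finRotate 3` is the cycle `(1 2 3)`. -/
noncomputable def xi (ν : ℝ) : MonoidAlgebra ℝ (Equiv.Perm (Fin 3)) :=
  (1/3 : ℝ) • (MonoidAlgebra.single 1 1 + MonoidAlgebra.single (Equiv.swap 1 2) ν +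
    MonoidAlgebra.single (Equiv.swap 0 1) (1 - ν) - MonoidAlgebra.single (finRotate 3) ν +
    MonoidAlgebra.single (finRotate 3)⁻¹ (ν - 1) - MonoidAlgebra.single (Equiv.swap 0 2) 1)
/-- `η := (1/3)(id − (1 2) − (1 2 3) + (1 3)) ∈ ℝ[S_3]`, with `0`-based indices in `Fin 3`. -/
noncomputable def eta : MonoidAlgebra ℝ (Equiv.Perm (Fin 3)) :=
  (1/3 : ℝ) • (MonoidAlgebra.single 1 1 - MonoidAlgebra.single (Equiv.swap 0 1) 1 -
    MonoidAlgebra.single (finRotate 3) 1 + MonoidAlgebra.single (Equiv.swap 0 2) 1)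

/-!
Every `y_{t'}* F` satisfies the four identities defining `A'(V)`, and conversely every
`R ∈ A'(V)` satisfies `y_{t'}* R = 24 R` (`24` being the hook-length product of the shape
`(3, 2)`), so `A'(V)` is the image of `y_{t'}*`. As products `φ₀ ⊗ ⋯ ⊗ φ₄` of linear forms span
all `5`-linear forms, it suffices to write each `y_{t'}*(φ₀ ⊗ ⋯ ⊗ φ₄)` as an explicit combination
of tensors `y_{t'}*(e(f ⊗ g ⊗ h) ⊗ B)` with `B` a symmetric (resp. alternating) product of two
of the `φᵢ`; these are generators because `e` is idempotent. For `e = ξ_ν` the combinations give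
`(2ν - 1) · y_{t'}*(φ₀ ⊗ ⋯ ⊗ φ₄)`.
-/


section GroupRingAction

variable {V : Type} [AddCommGroup V] [Module ℝ V] {r : ℕ}

@[simp]
theorem coeff_astar (a : MonoidAlgebra ℝ (Equiv.Perm (Fin r))) (p : Equiv.Perm (Fin r)) :
    (astar a).coeff p = a.coeff p⁻¹ :=
  rfl

theorem astar_add (a b : MonoidAlgebra ℝ (Equiv.Perm (Fin r))) :
    astar (a + b) = astar a + astar b := by
  ext p; simp

theorem astar_sub (a b : MonoidAlgebra ℝ (Equiv.Perm (Fin r))) :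
    astar (a - b) = astar a - astar b := by
  ext p; simp

theorem astar_single (p : Equiv.Perm (Fin r)) (c : ℝ) :
    astar (MonoidAlgebra.single p c) = MonoidAlgebra.single p⁻¹ c := by
  ext q
  simp [Finsupp.single_apply, inv_eq_iff_eq_inv]

theorem fact_add (a b : MonoidAlgebra ℝ (Equiv.Perm (Fin r))) (T : (Fin r → V) → ℝ)
    (v : Fin r → V) :
    fact (a + b) T v = fact a T v + fact b T v := by
  simp only [fact, MonoidAlgebra.coeff_add, Finsupp.add_apply, add_mul, Finset.sum_add_distrib]

theorem fact_sub (a b : MonoidAlgebra ℝ (Equiv.Perm (Fin r))) (T : (Fin r → V) → ℝ)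
    (v : Fin r → V) :
    fact (a - b) T v = fact a T v - fact b T v := by
  simp only [fact, MonoidAlgebra.coeff_sub, Finsupp.sub_apply, sub_mul, Finset.sum_sub_distrib]

theorem fact_smul (c : ℝ) (a : MonoidAlgebra ℝ (Equiv.Perm (Fin r))) (T : (Fin r → V) → ℝ)
    (v : Fin r → V) : fact (c • a) T v = c * fact a T v := by
  simp only [fact, MonoidAlgebra.coeff_smul, Finsupp.smul_apply, smul_eq_mul, Finset.mul_sum,
    mul_assoc]

theorem fact_single (p : Equiv.Perm (Fin r)) (c : ℝ) (T : (Fin r → V) → ℝ) (v : Fin r → V) :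
    fact (MonoidAlgebra.single p c) T v = c * T (fun i => v (p i)) := by
  simp [fact, Finsupp.single_apply, ite_mul]

theorem coe_gact (a : MonoidAlgebra ℝ (Equiv.Perm (Fin r)))
    (T : MultilinearMap ℝ (fun _ : Fin r => V) ℝ) : ⇑(gact a T) = fact a T := by
  ext v; simp [gact, fact]

noncomputable def gactLinear (a : MonoidAlgebra ℝ (Equiv.Perm (Fin r))) :
    MultilinearMap ℝ (fun _ : Fin r => V) ℝ →ₗ[ℝ] MultilinearMap ℝ (fun _ : Fin r => V) ℝ where
  toFun := gact a
  map_add' T S := by ext v; simp [coe_gact, fact, mul_add, Finset.sum_add_distrib]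
  map_smul' c T := by ext v; simp [coe_gact, fact, Finset.mul_sum, mul_left_comm]

end GroupRingAction

section Expansions

theorem comp_perm_fin3 {α : Type*} (v : Fin 3 → α) (σ : Equiv.Perm (Fin 3)) :
    (fun i => v (σ i)) = ![v (σ 0), v (σ 1), v (σ 2)] := by
  funext i; fin_cases i <;> rfl

theorem comp_perm_fin5 {α : Type*} (v : Fin 5 → α) (σ : Equiv.Perm (Fin 5)) :
    (fun i => v (σ i)) = ![v (σ 0), v (σ 1), v (σ 2), v (σ 3), v (σ 4)] := by
  funext i; fin_cases i <;> rfl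

variable {V : Type} [AddCommGroup V] [Module ℝ V]

theorem fact_astar_ytp (T : (Fin 5 → V) → ℝ) (v : Fin 5 → V) :
    fact (astar ytp) T v =
      T ![v 0, v 1, v 2, v 3, v 4] - T ![v 1, v 0, v 2, v 3, v 4]
      - T ![v 0, v 1, v 3, v 2, v 4] + T ![v 1, v 0, v 3, v 2, v 4]
      + T ![v 0, v 3, v 2, v 1, v 4] - T ![v 1, v 3, v 2, v 0, v 4]
      - T ![v 0, v 2, v 3, v 1, v 4] + T ![v 1, v 2, v 3, v 0, v 4]
      + T ![v 2, v 1, v 0, v 3, v 4] - T ![v 2, v 0, v 1, v 3, v 4]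
      - T ![v 3, v 1, v 0, v 2, v 4] + T ![v 3, v 0, v 1, v 2, v 4]
      + T ![v 2, v 3, v 0, v 1, v 4] - T ![v 2, v 3, v 1, v 0, v 4]
      - T ![v 3, v 2, v 0, v 1, v 4] + T ![v 3, v 2, v 1, v 0, v 4]
      + T ![v 4, v 1, v 2, v 3, v 0] - T ![v 4, v 0, v 2, v 3, v 1]
      - T ![v 4, v 1, v 3, v 2, v 0] + T ![v 4, v 0, v 3, v 2, v 1]
      + T ![v 4, v 3, v 2, v 1, v 0] - T ![v 4, v 3, v 2, v 0, v 1]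
      - T ![v 4, v 2, v 3, v 1, v 0] + T ![v 4, v 2, v 3, v 0, v 1]
      + T ![v 0, v 1, v 4, v 3, v 2] - T ![v 1, v 0, v 4, v 3, v 2]
      - T ![v 0, v 1, v 4, v 2, v 3] + T ![v 1, v 0, v 4, v 2, v 3]
      + T ![v 0, v 3, v 4, v 1, v 2] - T ![v 1, v 3, v 4, v 0, v 2]
      - T ![v 0, v 2, v 4, v 1, v 3] + T ![v 1, v 2, v 4, v 0, v 3]
      + T ![v 4, v 1, v 0, v 3, v 2] - T ![v 4, v 0, v 1, v 3, v 2]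
      - T ![v 4, v 1, v 0, v 2, v 3] + T ![v 4, v 0, v 1, v 2, v 3]
      + T ![v 4, v 3, v 0, v 1, v 2] - T ![v 4, v 3, v 1, v 0, v 2]
      - T ![v 4, v 2, v 0, v 1, v 3] + T ![v 4, v 2, v 1, v 0, v 3]
      + T ![v 2, v 1, v 4, v 3, v 0] - T ![v 2, v 0, v 4, v 3, v 1]
      - T ![v 3, v 1, v 4, v 2, v 0] + T ![v 3, v 0, v 4, v 2, v 1]
      + T ![v 2, v 3, v 4, v 1, v 0] - T ![v 2, v 3, v 4, v 0, v 1]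
      - T ![v 3, v 2, v 4, v 1, v 0] + T ![v 3, v 2, v 4, v 0, v 1] := by
  have hH : Finset.univ.filter (fun p : Equiv.Perm (Fin 5) =>
      ({0, 2, 4} : Finset (Fin 5)).image p = {0, 2, 4} ∧
      ({1, 3} : Finset (Fin 5)).image p = {1, 3}) =
    {1, Equiv.swap 1 3, Equiv.swap 0 2, Equiv.swap 0 2 * Equiv.swap 1 3, Equiv.swap 0 4,
      Equiv.swap 0 4 * Equiv.swap 1 3, Equiv.swap 2 4, Equiv.swap 2 4 * Equiv.swap 1 3,
      Equiv.swap 0 2 * Equiv.swap 2 4, Equiv.swap 0 2 * Equiv.swap 2 4 * Equiv.swap 1 3,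
      Equiv.swap 0 4 * Equiv.swap 2 4, Equiv.swap 0 4 * Equiv.swap 2 4 * Equiv.swap 1 3} := by
    decide
  rw [ytp, hH]
  repeat rw [Finset.sum_insert (by decide)]
  simp only [Finset.sum_singleton, add_mul, mul_add, mul_sub, MonoidAlgebra.single_mul_single,
    one_mul, mul_one, astar_add, astar_sub, astar_single, fact_add, fact_sub, fact_single]
  simp only [comp_perm_fin5]
  simp only [mul_inv_rev, inv_one, Equiv.swap_inv, Equiv.Perm.mul_apply, Equiv.Perm.coe_one, id_eq,
    Equiv.swap_apply_def, Fin.isValue, Fin.reduceEq, zero_ne_one, one_ne_zero, ↓reduceIte]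
  ring

theorem fact_eta (T : (Fin 3 → V) → ℝ) (v : Fin 3 → V) :
    fact eta T v = (1 / 3) * (T ![v 0, v 1, v 2] - T ![v 1, v 0, v 2] - T ![v 1, v 2, v 0] +
      T ![v 2, v 1, v 0]) := by
  simp only [eta, fact_smul, fact_add, fact_sub, fact_single, comp_perm_fin3]
  simp [Equiv.swap_apply_def]

theorem fact_xi (ν : ℝ) (T : (Fin 3 → V) → ℝ) (v : Fin 3 → V) :
    fact (xi ν) T v = (1 / 3) * (T ![v 0, v 1, v 2] + ν * T ![v 0, v 2, v 1] +
      (1 - ν) * T ![v 1, v 0, v 2] - ν * T ![v 1, v 2, v 0] + (ν - 1) * T ![v 2, v 0, v 1] -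
      T ![v 2, v 1, v 0]) := by
  simp only [xi, fact_smul, fact_add, fact_sub, fact_single, comp_perm_fin3]
  simp [Equiv.swap_apply_def, show (-1 : Fin 3) = 2 from rfl]

end Expansions

section CovDerivCurvature

variable {V : Type} [AddCommGroup V] [Module ℝ V]

def IsCovDerivCurvature (R : (Fin 5 → V) → ℝ) : Prop :=
  (∀ u w x y z : V, R ![w, x, y, z, u] = - R ![w, x, z, y, u]) ∧
  (∀ u w x y z : V, R ![w, x, y, z, u] = R ![y, z, w, x, u]) ∧
  (∀ u w x y z : V, R ![w, x, y, z, u] + R ![w, y, z, x, u] + R ![w, z, x, y, u] = 0) ∧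
  (∀ u w x y z : V, R ![w, x, y, z, u] + R ![w, x, z, u, y] + R ![w, x, u, y, z] = 0)

theorem isCovDerivCurvature_fact_astar_ytp (F : (Fin 5 → V) → ℝ) :
    IsCovDerivCurvature (fact (astar ytp) F) := by
  refine ⟨fun u w x y z => ?_, fun u w x y z => ?_, fun u w x y z => ?_, fun u w x y z => ?_⟩ <;>
  · simp only [fact_astar_ytp, Matrix.cons_val]
    ring

theorem IsCovDerivCurvature.fact_astar_ytp_eq {R : (Fin 5 → V) → ℝ} (hR : IsCovDerivCurvature R)
    (v : Fin 5 → V) : fact (astar ytp) R v = 24 * R v := by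
  obtain ⟨h1, h2, h3, h4⟩ := hR
  obtain ⟨a0, a1, a2, a3, a4, rfl⟩ : ∃ a0 a1 a2 a3 a4, v = ![a0, a1, a2, a3, a4] :=
    ⟨v 0, v 1, v 2, v 3, v 4, by funext i; fin_cases i <;> rfl⟩
  simp only [fact_astar_ytp, Matrix.cons_val]
  linear_combination
    - 3 * h1 a4 a0 a1 a2 a3 - 3 * h1 a3 a0 a1 a2 a4 + 3 * h1 a2 a0 a1 a3 a4
    + 14 * h1 a4 a0 a2 a1 a3 + h1 a1 a0 a2 a3 a4 + 2 * h1 a4 a0 a3 a1 a2 - 5 * h1 a1 a0 a3 a2 a4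
    - h1 a1 a0 a4 a2 a3 + h1 a4 a1 a0 a2 a3 + h1 a3 a1 a0 a2 a4 - h1 a2 a1 a0 a3 a4
    + 2 * h1 a4 a1 a2 a0 a3 - 4 * h1 a3 a1 a2 a0 a4 - h1 a0 a1 a2 a3 a4 - 2 * h1 a4 a1 a3 a0 a2
    + 4 * h1 a2 a1 a3 a0 a4 + 5 * h1 a0 a1 a3 a2 a4 + h1 a0 a1 a4 a2 a3 - h1 a1 a2 a0 a3 a4
    + h1 a0 a2 a1 a3 a4 - 3 * h1 a4 a2 a3 a0 a1 - 3 * h1 a1 a2 a3 a0 a4 + 3 * h1 a0 a2 a3 a1 a4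
    - h1 a3 a2 a4 a0 a1 - h1 a1 a2 a4 a0 a3 + h1 a0 a2 a4 a1 a3 + h1 a1 a3 a0 a2 a4
    - h1 a0 a3 a1 a2 a4 + h1 a4 a3 a2 a0 a1 + h1 a1 a3 a2 a0 a4 - h1 a0 a3 a2 a1 a4
    + h1 a2 a3 a4 a0 a1 + h1 a1 a3 a4 a0 a2 - h1 a0 a3 a4 a1 a2 + h1 a1 a4 a0 a2 a3
    - h1 a0 a4 a1 a2 a3 + h1 a3 a4 a2 a0 a1 + h1 a1 a4 a2 a0 a3 - h1 a0 a4 a2 a1 a3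
    - h1 a2 a4 a3 a0 a1 - h1 a1 a4 a3 a0 a2 + h1 a0 a4 a3 a1 a2 - 4 * h2 a4 a0 a1 a2 a3
    - h2 a3 a0 a1 a2 a4 + 2 * h2 a4 a0 a1 a3 a2 + h2 a2 a0 a1 a3 a4 + 2 * h2 a3 a0 a1 a4 a2
    - 2 * h2 a2 a0 a1 a4 a3 - 8 * h2 a4 a0 a2 a1 a3 + h2 a4 a0 a2 a3 a1 + h2 a1 a0 a2 a3 a4
    + h2 a3 a0 a2 a4 a1 - h2 a1 a0 a2 a4 a3 + 8 * h2 a4 a0 a3 a1 a2 - h2 a4 a0 a3 a2 a1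
    - h2 a1 a0 a3 a2 a4 - h2 a2 a0 a3 a4 a1 + h2 a1 a0 a3 a4 a2 - 4 * h2 a3 a0 a4 a1 a2
    + 4 * h2 a2 a0 a4 a1 a3 - 3 * h2 a1 a0 a4 a2 a3 + h2 a1 a0 a4 a3 a2 - 2 * h2 a4 a1 a0 a2 a3
    - h2 a3 a1 a0 a2 a4 + h2 a2 a1 a0 a3 a4 - h2 a4 a1 a2 a3 a0 - h2 a0 a1 a2 a3 a4
    - h2 a3 a1 a2 a4 a0 + h2 a0 a1 a2 a4 a3 + h2 a4 a1 a3 a2 a0 + h2 a0 a1 a3 a2 a4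
    + h2 a2 a1 a3 a4 a0 - h2 a0 a1 a3 a4 a2 + 3 * h2 a0 a1 a4 a2 a3 - h2 a0 a1 a4 a3 a2
    + h2 a1 a2 a0 a3 a4 - h2 a0 a2 a1 a3 a4 + 2 * h2 a1 a2 a3 a4 a0 - 2 * h2 a0 a2 a3 a4 a1
    + h2 a1 a2 a4 a3 a0 - h2 a0 a2 a4 a3 a1 - 16 * h3 a4 a0 a1 a2 a3 + 4 * h3 a3 a0 a1 a2 a4
    - 4 * h3 a2 a0 a1 a3 a4 + 4 * h3 a1 a0 a2 a3 a4 - 4 * h3 a0 a1 a2 a3 a4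
    - 6 * h4 a4 a0 a2 a1 a3 + 6 * h4 a4 a0 a3 a1 a2 + 6 * h4 a4 a1 a2 a0 a3
    - 6 * h4 a4 a1 a3 a0 a2

variable (V) in
def covDerivCurvatureTensors : Submodule ℝ (MultilinearMap ℝ (fun _ : Fin 5 => V) ℝ) where
  carrier := {R | IsCovDerivCurvature R}
  add_mem' := by
    rintro R S ⟨hR1, hR2, hR3, hR4⟩ ⟨hS1, hS2, hS3, hS4⟩
    refine ⟨fun u w x y z => ?_, fun u w x y z => ?_, fun u w x y z => ?_, fun u w x y z => ?_⟩ <;>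
      simp only [add_apply]
    · linear_combination hR1 u w x y z + hS1 u w x y z
    · linear_combination hR2 u w x y z + hS2 u w x y z
    · linear_combination hR3 u w x y z + hS3 u w x y z
    · linear_combination hR4 u w x y z + hS4 u w x y z
  zero_mem' := by
    refine ⟨fun u w x y z => ?_, fun u w x y z => ?_, fun u w x y z => ?_, fun u w x y z => ?_⟩ <;>
      simp
  smul_mem' := by
    rintro c R ⟨h1, h2, h3, h4⟩
    refine ⟨fun u w x y z => ?_, fun u w x y z => ?_, fun u w x y z => ?_, fun u w x y z => ?_⟩ <;>
      simp only [smul_apply, smul_eq_mul]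
    · linear_combination c * h1 u w x y z
    · linear_combination c * h2 u w x y z
    · linear_combination c * h3 u w x y z
    · linear_combination c * h4 u w x y z

end CovDerivCurvature

section Forms

variable {K V ι : Type*} [Field K] [AddCommGroup V] [Module K V] [Fintype ι]

noncomputable def prodForms (φ : ι → Module.Dual K V) : MultilinearMap K (fun _ : ι => V) K :=
  (MultilinearMap.mkPiAlgebra K ι K).compLinearMap φ

theorem prodForms_apply (φ : ι → Module.Dual K V) (v : ι → V) :
    prodForms φ v = ∏ i, φ i (v i) := by
  simp [prodForms]

theorem span_range_prodForms [FiniteDimensional K V] :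
    Submodule.span K (Set.range (prodForms (K := K) (V := V) (ι := ι))) = ⊤ := by
  let b := Basis.multilinearMap (fun _ : ι => Module.finBasis K V) (Module.Basis.singleton Unit K)
  refine eq_top_iff.2 (b.span_eq ▸ Submodule.span_mono ?_)
  rintro _ ⟨j, rfl⟩
  refine ⟨fun i => (Module.finBasis K V).coord (j.1 i), ?_⟩
  ext v
  simp [b, Basis.multilinearMap_apply_apply, prodForms_apply]

end Forms

section Tensor

variable {V : Type} [AddCommGroup V] [Module ℝ V]

noncomputable def bilinToMultilinear (B : V →ₗ[ℝ] V →ₗ[ℝ] ℝ) :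
    MultilinearMap ℝ (fun _ : Fin 2 => V) ℝ where
  toFun v := B (v 0) (v 1)
  map_update_add' v i x y := by fin_cases i <;> simp
  map_update_smul' v i c x := by fin_cases i <;> simp

noncomputable def tensorBilin (U : MultilinearMap ℝ (fun _ : Fin 3 => V) ℝ)
    (B : V →ₗ[ℝ] V →ₗ[ℝ] ℝ) : MultilinearMap ℝ (fun _ : Fin 5 => V) ℝ :=
  (LinearMap.mul' ℝ ℝ).compMultilinearMap
    ((U.domCoprod (bilinToMultilinear B)).domDomCongr finSumFinEquiv)

theorem tensorBilin_apply (U : MultilinearMap ℝ (fun _ : Fin 3 => V) ℝ)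
    (B : V →ₗ[ℝ] V →ₗ[ℝ] ℝ) (v : Fin 5 → V) :
    tensorBilin U B v = U ![v 0, v 1, v 2] * B (v 3) (v 4) := by
  have hU : (fun i : Fin 3 => v (finSumFinEquiv (m := 3) (n := 2) (Sum.inl i))) =
      ![v 0, v 1, v 2] := by
    funext i; fin_cases i <;> rfl
  simp only [tensorBilin, LinearMap.compMultilinearMap_apply, MultilinearMap.domDomCongr_apply,
    MultilinearMap.domCoprod_apply, LinearMap.mul'_apply, hU]
  rfl

noncomputable def symmProd (f g : Module.Dual ℝ V) : V →ₗ[ℝ] V →ₗ[ℝ] ℝ :=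
  (1 / 2 : ℝ) • (f.smulRight g + g.smulRight f)

noncomputable def wedgeProd (f g : Module.Dual ℝ V) : V →ₗ[ℝ] V →ₗ[ℝ] ℝ :=
  (1 / 2 : ℝ) • (f.smulRight g - g.smulRight f)

theorem symmProd_apply (f g : Module.Dual ℝ V) (x y : V) :
    symmProd f g x y = (1 / 2) * (f x * g y + g x * f y) := by
  simp [symmProd, mul_add]

theorem wedgeProd_apply (f g : Module.Dual ℝ V) (x y : V) :
    wedgeProd f g x y = (1 / 2) * (f x * g y - g x * f y) := by
  simp [wedgeProd, mul_sub]

def IsSymmetricForm (B : V →ₗ[ℝ] V →ₗ[ℝ] ℝ) : Prop := ∀ x y, B x y = B y x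

def IsAntisymmetricForm (B : V →ₗ[ℝ] V →ₗ[ℝ] ℝ) : Prop := ∀ x y, B x y = - B y x

theorem isSymmetricForm_symmProd (f g : Module.Dual ℝ V) : IsSymmetricForm (symmProd f g) := by
  intro x y; simp only [symmProd_apply]; ring

theorem isAntisymmetricForm_wedgeProd (f g : Module.Dual ℝ V) :
    IsAntisymmetricForm (wedgeProd f g) := by
  intro x y; simp only [wedgeProd_apply]; ring

theorem gact_eta_idem (U : MultilinearMap ℝ (fun _ : Fin 3 => V) ℝ) :
    gact eta (gact eta U) = gact eta U := by
  ext v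
  simp only [coe_gact, fact_eta, Matrix.cons_val]
  ring

theorem gact_xi_idem (ν : ℝ) (U : MultilinearMap ℝ (fun _ : Fin 3 => V) ℝ) :
    gact (xi ν) (gact (xi ν) U) = gact (xi ν) U := by
  ext v
  simp only [coe_gact, fact_xi, Matrix.cons_val]
  ring

end Tensor

section Span

variable {V : Type} [AddCommGroup V] [Module ℝ V]

def ytpTensors (e : MonoidAlgebra ℝ (Equiv.Perm (Fin 3))) (P : (V →ₗ[ℝ] V →ₗ[ℝ] ℝ) → Prop) :
    Set (MultilinearMap ℝ (fun _ : Fin 5 => V) ℝ) :=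
  {T | ∃ (U : MultilinearMap ℝ (fun _ : Fin 3 => V) ℝ) (B : V →ₗ[ℝ] V →ₗ[ℝ] ℝ),
    gact e U = U ∧ P B ∧
    ∀ v : Fin 5 → V, T v = fact (astar ytp) (fun v' => U ![v' 0, v' 1, v' 2] * B (v' 3) (v' 4)) v}

theorem gact_tensorBilin_mem_ytpTensors {e : MonoidAlgebra ℝ (Equiv.Perm (Fin 3))}
    {P : (V →ₗ[ℝ] V →ₗ[ℝ] ℝ) → Prop} {U : MultilinearMap ℝ (fun _ : Fin 3 => V) ℝ}
    {B : V →ₗ[ℝ] V →ₗ[ℝ] ℝ} (hU : gact e U = U) (hB : P B) :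
    gact (astar ytp) (tensorBilin U B) ∈ ytpTensors e P :=
  ⟨U, B, hU, hB, fun v => by
    rw [coe_gact, show ⇑(tensorBilin U B) = _ from funext (tensorBilin_apply U B)]⟩

theorem span_ytpTensors_le (e : MonoidAlgebra ℝ (Equiv.Perm (Fin 3)))
    (P : (V →ₗ[ℝ] V →ₗ[ℝ] ℝ) → Prop) :
    Submodule.span ℝ (ytpTensors e P) ≤ covDerivCurvatureTensors V := by
  refine Submodule.span_le.2 ?_
  rintro T ⟨U, B, -, -, hT⟩
  change IsCovDerivCurvature T
  rw [show ⇑T = _ from funext hT]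
  exact isCovDerivCurvature_fact_astar_ytp _

theorem covDerivCurvatureTensors_le [FiniteDimensional ℝ V]
    {S : Submodule ℝ (MultilinearMap ℝ (fun _ : Fin 5 => V) ℝ)}
    (hS : ∀ φ : Fin 5 → Module.Dual ℝ V, gact (astar ytp) (prodForms φ) ∈ S) :
    covDerivCurvatureTensors V ≤ S := by
  intro R hR
  have hR24 : R = (24 : ℝ)⁻¹ • gactLinear (astar ytp) R := by
    ext v
    simp [gactLinear, coe_gact, IsCovDerivCurvature.fact_astar_ytp_eq hR]
  have hspan : Submodule.span ℝ (Set.range prodForms) ≤ S.comap (gactLinear (astar ytp)) :=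
    Submodule.span_le.2 (Set.range_subset_iff.2 hS)
  rw [hR24]
  exact S.smul_mem _ (hspan (by simp [span_range_prodForms]))

theorem covDerivCurvatureTensors_eq_span [FiniteDimensional ℝ V]
    {e : MonoidAlgebra ℝ (Equiv.Perm (Fin 3))} {P : (V →ₗ[ℝ] V →ₗ[ℝ] ℝ) → Prop}
    (h : ∀ φ : Fin 5 → Module.Dual ℝ V,
      gact (astar ytp) (prodForms φ) ∈ Submodule.span ℝ (ytpTensors e P)) :
    covDerivCurvatureTensors V = Submodule.span ℝ (ytpTensors e P) :=
  le_antisymm (covDerivCurvatureTensors_le h) (span_ytpTensors_le e P)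

end Span

section KeyIdentities

variable {V : Type} [AddCommGroup V] [Module ℝ V]

noncomputable def ytpTensor (e : MonoidAlgebra ℝ (Equiv.Perm (Fin 3))) (f g h : Module.Dual ℝ V)
    (B : V →ₗ[ℝ] V →ₗ[ℝ] ℝ) : MultilinearMap ℝ (fun _ : Fin 5 => V) ℝ :=
  gact (astar ytp) (tensorBilin (gact e (prodForms ![f, g, h])) B)

theorem ytpTensor_mem_span {e : MonoidAlgebra ℝ (Equiv.Perm (Fin 3))}
    (he : ∀ U : MultilinearMap ℝ (fun _ : Fin 3 => V) ℝ, gact e (gact e U) = gact e U)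
    {P : (V →ₗ[ℝ] V →ₗ[ℝ] ℝ) → Prop} {B : V →ₗ[ℝ] V →ₗ[ℝ] ℝ} (hB : P B)
    (f g h : Module.Dual ℝ V) : ytpTensor e f g h B ∈ Submodule.span ℝ (ytpTensors e P) :=
  Submodule.subset_span (gact_tensorBilin_mem_ytpTensors (he _) hB)

theorem gact_astar_ytp_prodForms_eq_eta_symmProd (φ : Fin 5 → Module.Dual ℝ V) :
    gact (astar ytp) (prodForms φ) =
      (3 / 4 : ℝ) • ytpTensor eta (φ 0) (φ 2) (φ 1) (symmProd (φ 3) (φ 4)) -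
      (9 / 4 : ℝ) • ytpTensor eta (φ 0) (φ 3) (φ 1) (symmProd (φ 2) (φ 4)) +
      (3 / 4 : ℝ) • ytpTensor eta (φ 0) (φ 4) (φ 1) (symmProd (φ 2) (φ 3)) := by
  ext v
  simp only [ytpTensor, add_apply, sub_apply, smul_apply, smul_eq_mul, coe_gact, fact_astar_ytp,
    tensorBilin_apply, fact_eta, prodForms_apply, Fin.prod_univ_three, Fin.prod_univ_five,
    symmProd_apply, Matrix.cons_val]
  ring

theorem gact_astar_ytp_prodForms_eq_eta_wedgeProd (φ : Fin 5 → Module.Dual ℝ V) :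
    gact (astar ytp) (prodForms φ) =
      (3 / 2 : ℝ) • ytpTensor eta (φ 0) (φ 1) (φ 2) (wedgeProd (φ 3) (φ 4)) -
      ytpTensor eta (φ 0) (φ 1) (φ 3) (wedgeProd (φ 2) (φ 4)) -
      ytpTensor eta (φ 0) (φ 2) (φ 1) (wedgeProd (φ 3) (φ 4)) +
      (1 / 2 : ℝ) • ytpTensor eta (φ 0) (φ 3) (φ 1) (wedgeProd (φ 2) (φ 4)) +
      (1 / 2 : ℝ) • ytpTensor eta (φ 0) (φ 2) (φ 3) (wedgeProd (φ 1) (φ 4)) := by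
  ext v
  simp only [ytpTensor, add_apply, sub_apply, smul_apply, smul_eq_mul, coe_gact, fact_astar_ytp,
    tensorBilin_apply, fact_eta, prodForms_apply, Fin.prod_univ_three, Fin.prod_univ_five,
    wedgeProd_apply, Matrix.cons_val]
  ring

theorem smul_gact_astar_ytp_prodForms_eq_xi_symmProd (ν : ℝ) (φ : Fin 5 → Module.Dual ℝ V) :
    (2 * ν - 1) • gact (astar ytp) (prodForms φ) =
      (3 / 2 : ℝ) • ytpTensor (xi ν) (φ 0) (φ 1) (φ 2) (symmProd (φ 3) (φ 4)) -
      (9 / 2 : ℝ) • ytpTensor (xi ν) (φ 0) (φ 1) (φ 3) (symmProd (φ 2) (φ 4)) +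
      (3 / 2 : ℝ) • ytpTensor (xi ν) (φ 0) (φ 1) (φ 4) (symmProd (φ 2) (φ 3)) := by
  ext v
  simp only [ytpTensor, add_apply, sub_apply, smul_apply, smul_eq_mul, coe_gact, fact_astar_ytp,
    tensorBilin_apply, fact_xi, prodForms_apply, Fin.prod_univ_three, Fin.prod_univ_five,
    symmProd_apply, Matrix.cons_val]
  ring

theorem smul_gact_astar_ytp_prodForms_eq_xi_wedgeProd (ν : ℝ) (φ : Fin 5 → Module.Dual ℝ V) :
    (2 * ν - 1) • gact (astar ytp) (prodForms φ) =
      (2 : ℝ) • ytpTensor (xi ν) (φ 0) (φ 2) (φ 1) (wedgeProd (φ 3) (φ 4)) -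
      ytpTensor (xi ν) (φ 0) (φ 1) (φ 2) (wedgeProd (φ 3) (φ 4)) -
      ytpTensor (xi ν) (φ 0) (φ 3) (φ 1) (wedgeProd (φ 2) (φ 4)) +
      ytpTensor (xi ν) (φ 0) (φ 2) (φ 3) (wedgeProd (φ 1) (φ 4)) := by
  ext v
  simp only [ytpTensor, add_apply, sub_apply, smul_apply, smul_eq_mul, coe_gact, fact_astar_ytp,
    tensorBilin_apply, fact_xi, prodForms_apply, Fin.prod_univ_three, Fin.prod_univ_five,
    wedgeProd_apply, Matrix.cons_val]
  ring

end KeyIdentities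

section Membership

variable {V : Type} [AddCommGroup V] [Module ℝ V]

theorem gact_astar_ytp_prodForms_mem_span_eta_symm (φ : Fin 5 → Module.Dual ℝ V) :
    gact (astar ytp) (prodForms φ) ∈
      Submodule.span ℝ (ytpTensors eta IsSymmetricForm) := by
  have hT := fun f g h s t : Module.Dual ℝ V =>
    ytpTensor_mem_span gact_eta_idem (isSymmetricForm_symmProd s t) f g h
  rw [gact_astar_ytp_prodForms_eq_eta_symmProd]
  exact add_mem
    (sub_mem (Submodule.smul_mem _ _ (hT _ _ _ _ _)) (Submodule.smul_mem _ _ (hT _ _ _ _ _)))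
    (Submodule.smul_mem _ _ (hT _ _ _ _ _))

theorem gact_astar_ytp_prodForms_mem_span_eta_alt (φ : Fin 5 → Module.Dual ℝ V) :
    gact (astar ytp) (prodForms φ) ∈
      Submodule.span ℝ (ytpTensors eta IsAntisymmetricForm) := by
  have hT := fun f g h s t : Module.Dual ℝ V =>
    ytpTensor_mem_span gact_eta_idem (isAntisymmetricForm_wedgeProd s t) f g h
  rw [gact_astar_ytp_prodForms_eq_eta_wedgeProd]
  exact add_mem
    (add_mem
      (sub_mem (sub_mem (Submodule.smul_mem _ _ (hT _ _ _ _ _)) (hT _ _ _ _ _)) (hT _ _ _ _ _))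
      (Submodule.smul_mem _ _ (hT _ _ _ _ _)))
    (Submodule.smul_mem _ _ (hT _ _ _ _ _))

theorem gact_astar_ytp_prodForms_mem_span_xi_symm {ν : ℝ} (hν : ν ≠ 1 / 2)
    (φ : Fin 5 → Module.Dual ℝ V) :
    gact (astar ytp) (prodForms φ) ∈
      Submodule.span ℝ (ytpTensors (xi ν) IsSymmetricForm) := by
  have hν' : 2 * ν - 1 ≠ 0 := by contrapose! hν; linarith
  have hT := fun f g h s t : Module.Dual ℝ V =>
    ytpTensor_mem_span (gact_xi_idem ν) (isSymmetricForm_symmProd s t) f g h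
  rw [← inv_smul_smul₀ hν' (gact _ _), smul_gact_astar_ytp_prodForms_eq_xi_symmProd]
  exact Submodule.smul_mem _ _ (add_mem (sub_mem (Submodule.smul_mem _ _ (hT _ _ _ _ _))
    (Submodule.smul_mem _ _ (hT _ _ _ _ _))) (Submodule.smul_mem _ _ (hT _ _ _ _ _)))

theorem gact_astar_ytp_prodForms_mem_span_xi_alt {ν : ℝ} (hν : ν ≠ 1 / 2)
    (φ : Fin 5 → Module.Dual ℝ V) :
    gact (astar ytp) (prodForms φ) ∈
      Submodule.span ℝ (ytpTensors (xi ν) IsAntisymmetricForm) := by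
  have hν' : 2 * ν - 1 ≠ 0 := by contrapose! hν; linarith
  have hT := fun f g h s t : Module.Dual ℝ V =>
    ytpTensor_mem_span (gact_xi_idem ν) (isAntisymmetricForm_wedgeProd s t) f g h
  rw [← inv_smul_smul₀ hν' (gact _ _), smul_gact_astar_ytp_prodForms_eq_xi_wedgeProd]
  exact Submodule.smul_mem _ _ <| add_mem
    (sub_mem (sub_mem (Submodule.smul_mem _ _ (hT _ _ _ _ _)) (hT _ _ _ _ _)) (hT _ _ _ _ _))
    (hT _ _ _ _ _)

end Membership

/-- For `e = η` or `e = ξ_ν` with `ν ≠ 1/2`, the space `A'(V)` of algebraic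
covariant derivative curvature tensors equals the linear span of
`{y_{t'}*(U⊗S) : eU = U, S symmetric bilinear}` and also the linear span of
`{y_{t'}*(U⊗A) : eU = U, A alternating bilinear}`. -/
theorem stmt_16 (V : Type) [AddCommGroup V] [Module ℝ V] [FiniteDimensional ℝ V]
    (e : MonoidAlgebra ℝ (Equiv.Perm (Fin 3)))
    (he : e = eta ∨ ∃ ν : ℝ, ν ≠ 1/2 ∧ e = xi ν) :
    {R : MultilinearMap ℝ (fun _ : Fin 5 => V) ℝ |
      (∀ u w x y z : V, R ![w, x, y, z, u] = - R ![w, x, z, y, u]) ∧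
      (∀ u w x y z : V, R ![w, x, y, z, u] = R ![y, z, w, x, u]) ∧
      (∀ u w x y z : V,
        R ![w, x, y, z, u] + R ![w, y, z, x, u] + R ![w, z, x, y, u] = 0) ∧
      (∀ u w x y z : V,
        R ![w, x, y, z, u] + R ![w, x, z, u, y] + R ![w, x, u, y, z] = 0)} =
    ↑(Submodule.span ℝ {T : MultilinearMap ℝ (fun _ : Fin 5 => V) ℝ |
      ∃ (U : MultilinearMap ℝ (fun _ : Fin 3 => V) ℝ) (S : V →ₗ[ℝ] V →ₗ[ℝ] ℝ),
        gact e U = U ∧ (∀ x y : V, S x y = S y x) ∧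
        ∀ v : Fin 5 → V,
          T v = fact (astar ytp) (fun v' => U ![v' 0, v' 1, v' 2] * S (v' 3) (v' 4)) v}) ∧
    {R : MultilinearMap ℝ (fun _ : Fin 5 => V) ℝ |
      (∀ u w x y z : V, R ![w, x, y, z, u] = - R ![w, x, z, y, u]) ∧
      (∀ u w x y z : V, R ![w, x, y, z, u] = R ![y, z, w, x, u]) ∧
      (∀ u w x y z : V,
        R ![w, x, y, z, u] + R ![w, y, z, x, u] + R ![w, z, x, y, u] = 0) ∧
      (∀ u w x y z : V,
        R ![w, x, y, z, u] + R ![w, x, z, u, y] + R ![w, x, u, y, z] = 0)} =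
    ↑(Submodule.span ℝ {T : MultilinearMap ℝ (fun _ : Fin 5 => V) ℝ |
      ∃ (U : MultilinearMap ℝ (fun _ : Fin 3 => V) ℝ) (A : V →ₗ[ℝ] V →ₗ[ℝ] ℝ),
        gact e U = U ∧ (∀ x y : V, A x y = - A y x) ∧
        ∀ v : Fin 5 → V,
          T v = fact (astar ytp) (fun v' => U ![v' 0, v' 1, v' 2] * A (v' 3) (v' 4)) v}) := by
  rcases he with rfl | ⟨ν, hν, rfl⟩
  · exact ⟨congrArg SetLike.coe (covDerivCurvatureTensors_eq_span
        gact_astar_ytp_prodForms_mem_span_eta_symm),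
      congrArg SetLike.coe (covDerivCurvatureTensors_eq_span
        gact_astar_ytp_prodForms_mem_span_eta_alt)⟩
  · exact ⟨congrArg SetLike.coe (covDerivCurvatureTensors_eq_span
        (gact_astar_ytp_prodForms_mem_span_xi_symm hν)),
      congrArg SetLike.coe (covDerivCurvatureTensors_eq_span
        (gact_astar_ytp_prodForms_mem_span_xi_alt hν))⟩
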